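/- Let Z be a standard Borel space and let A ⊆ Z × H be a Borel set such that for every z ∈ Z the section A_z is nonempty, compact, and norm separable. Let ε > 0, and let Ã ⊆ Z × H be a Borel set with Ã ⊆ A such that for every z ∈ Z the section Ã_z is a (possibly empty) compact set. Then there exists a sequence (f_n) of Borel measurable maps f_n : Z → H with (z, f_n(z)) ∈ A for all z and n, such that for every z ∈ Z with Ã_z nonempty, the set { f_n(z) : n ∈ ℕ and f_n(z) ∈ Ã_z \ 𝔻_ε(Ã_z) } is nonempty and norm ε-dense in Ã_z \ 𝔻_ε(Ã_z). -/

import Mathlib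

/-
The values of a suitable sequence of Borel selectors meet every nonempty relatively open piece
`Ã_z ∩ U` of every section: take a countable closed network `(F_n)` of `H` and let `f_n` be a
Borel selector of `Ã ∩ (Z × F_n)` on the set of `z` where `Ã_z` meets `F_n`, and a selector of
`A` elsewhere. A point of `Ã_z` lies outside `𝔻_ε(Ã_z)` exactly when it has such a piece of norm
diameter at most `ε`, and these pieces are nonempty by Baire category: `Ã_z` is compact and
covered by countably many closed norm balls of radius `ε / 2`.

Borel selectors (lexicographic minima) and the Borel measurability of `{z | Ã_z ∩ F ≠ ∅}` rest on
Novikov's theorem that a Borel set with compact sections has a Borel projection. It follows from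
Novikov's separation theorem for countably many analytic sets with empty intersection: writing
the complement as a countable union of Borel rectangles with open sides, nonemptiness of a
section becomes a closed condition on which rectangles contain the base point.
-/

noncomputable section

/-- `H = [-1,1]^ℕ`, the product of countably many copies of `[-1,1]`, with the
product topology (and its Borel σ-algebra). -/
abbrev H : Type := ℕ → Set.Icc (-1 : ℝ) 1

/-- The supremum distance `‖f − g‖_∞ = sup_n |f(n) − g(n)|` on `H`. -/
noncomputable def normDist (f g : H) : ℝ := ⨆ n, |(f n : ℝ) - (g n : ℝ)|

/-- The norm diameter of `S ⊆ H`: `sup {‖f − g‖_∞ : f, g ∈ S}`. -/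
noncomputable def normDiam (S : Set H) : ℝ :=
  sSup {d : ℝ | ∃ f ∈ S, ∃ g ∈ S, d = normDist f g}

/-- `S ⊆ H` is norm separable: separable w.r.t. the metric `(f,g) ↦ ‖f − g‖_∞`. -/
def NormSeparable (S : Set H) : Prop :=
  ∃ D : Set H, D.Countable ∧ D ⊆ S ∧ ∀ f ∈ S, ∀ δ : ℝ, 0 < δ → ∃ g ∈ D, normDist f g < δ

/-- The Szlenk-type derivative `𝔻_ε(K)`: points of `K` all of whose open neighbourhoods `U`
have `K ∩ U` of norm diameter greater than `ε`. -/
def Dstar (ε : ℝ) (K : Set H) : Set H :=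
  {f | f ∈ K ∧ ∀ U : Set H, IsOpen U → f ∈ U → ε < normDiam (K ∩ U)}

open Set Function MeasureTheory TopologicalSpace PiNat Topology

theorem PiNat.exists_cylinder_subset {E : ℕ → Type*} [∀ n, TopologicalSpace (E n)]
    [∀ n, DiscreteTopology (E n)] {x : ∀ n, E n} {U : Set (∀ n, E n)} (hU : U ∈ 𝓝 x) :
    ∃ N, cylinder x N ⊆ U := by
  obtain ⟨-, ⟨y, N, rfl⟩, hx, hsub⟩ := (isTopologicalBasis_cylinders E).mem_nhds_iff.1 hU
  exact ⟨N, (mem_cylinder_iff_eq.1 hx).symm ▸ hsub⟩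

section Novikov

variable {α : Type*} [MeasurableSpace α]

def MeasurablySeparableFamily (S : ℕ → Set α) : Prop :=
  ∃ B : ℕ → Set α, (∀ n, S n ⊆ B n) ∧ (∀ n, MeasurableSet (B n)) ∧ ⋂ n, B n = ∅

theorem MeasurablySeparableFamily.of_update_iUnion {S T : ℕ → Set α} {m : ℕ}
    (hS : S m = ⋃ i, T i) (hT : ∀ i, MeasurablySeparableFamily (update S m (T i))) :
    MeasurablySeparableFamily S := by
  choose B hSB hB hBe using hT
  refine ⟨fun n => if n = m then ⋃ i, B i m else ⋂ i, B i n, fun n => ?_, fun n => ?_, ?_⟩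
  · dsimp only
    split_ifs with hn
    · subst hn
      exact hS ▸ iUnion_mono fun i => by simpa using hSB i n
    · exact subset_iInter fun i => by simpa [hn] using hSB i n
  · dsimp only
    split_ifs
    exacts [.iUnion fun i => hB i m, .iInter fun i => hB i n]
  · refine eq_empty_of_forall_notMem fun x hx => ?_
    obtain ⟨i, hi⟩ := mem_iUnion.1 (by simpa using mem_iInter.1 hx m)
    have hxi : x ∈ ⋂ n, B i n := mem_iInter.2 fun n => by
      rcases eq_or_ne n m with rfl | hn
      · exact hi
      · exact (by simpa [hn] using mem_iInter.1 hx n : ∀ i, x ∈ B i n) i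
    rwa [hBe i] at hxi

theorem MeasurablySeparableFamily.of_disjoint {S : ℕ → Set α} {n m : ℕ} (hnm : n ≠ m)
    {u v : Set α} (hu : MeasurableSet u) (hv : MeasurableSet v) (huv : Disjoint u v)
    (hSu : S n ⊆ u) (hSv : S m ⊆ v) : MeasurablySeparableFamily S := by
  refine ⟨fun j => if j = n then u else if j = m then v else univ, fun j => ?_, fun j => ?_, ?_⟩
  · dsimp only
    split_ifs with h h' <;> subst_vars <;> simp [*]
  · dsimp only
    split_ifs <;> simp [*]
  · exact eq_empty_of_forall_notMem fun x hx => disjoint_left.1 huv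
      (by simpa using mem_iInter.1 hx n) (by simpa [hnm.symm] using mem_iInter.1 hx m)

theorem exists_refine_of_not_measurablySeparableFamily (f : ℕ → (ℕ → ℕ) → α)
    {c : ℕ → ℕ → ℕ} {d : ℕ → ℕ}
    (h : ¬MeasurablySeparableFamily fun n => f n '' cylinder (c n) (d n)) (m : ℕ) :
    ∃ z ∈ cylinder (c m) (d m), ¬MeasurablySeparableFamily
      fun n => f n '' cylinder (update c m z n) (update d m (d m + 1) n) := by
  contrapose! h
  refine .of_update_iUnion (m := m)
    (T := fun i => f m '' cylinder (update (c m) (d m) i) (d m + 1)) ?_ fun i => ?_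
  · rw [← image_iUnion, iUnion_cylinder_update (c m) (d m)]
  · convert h _ (update_mem_cylinder _ _ i) using 1
    funext n
    rcases eq_or_ne n m with rfl | hn <;> simp [*]

theorem exists_forall_cylinder_subset_of_refine {P : (ℕ → ℕ → ℕ) → (ℕ → ℕ) → Prop}
    (hP : ∀ c d, P c d → ∀ m, ∃ z ∈ cylinder (c m) (d m),
      P (update c m z) (update d m (d m + 1)))
    {c₀ : ℕ → ℕ → ℕ} {d₀ : ℕ → ℕ} (h₀ : P c₀ d₀) :
    ∃ x : ℕ → ℕ → ℕ, ∀ N, ∃ c d, P c d ∧ ∀ n < N, cylinder (c n) (d n) ⊆ cylinder (x n) N := by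
  -- A state `(c, d)` stands for the cylinders `cylinder (c n) (d n)`. Stage `k` refines
  -- coordinate `k.unpair.1`, so every coordinate is refined infinitely often, and `x n` collects
  -- the digits of coordinate `n` as they freeze.
  choose z hz hPz using hP
  let q : ℕ → {s : (ℕ → ℕ → ℕ) × (ℕ → ℕ) // P s.1 s.2} := fun k => Nat.rec ⟨(c₀, d₀), h₀⟩
    (fun k s => ⟨(update s.1.1 k.unpair.1 (z _ _ s.2 k.unpair.1),
      update s.1.2 k.unpair.1 (s.1.2 k.unpair.1 + 1)), hPz _ _ _ _⟩) k
  set c := fun k => (q k).1.1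
  set d := fun k => (q k).1.2
  have hc : ∀ k, c (k + 1) = update (c k) k.unpair.1 (z _ _ (q k).2 k.unpair.1) := fun k => rfl
  have hd : ∀ k, d (k + 1) = update (d k) k.unpair.1 (d k k.unpair.1 + 1) := fun k => rfl
  have hanti : ∀ n, Antitone fun k => cylinder (c k n) (d k n) := fun n =>
    antitone_nat_of_succ_le fun k => by
      rcases eq_or_ne n k.unpair.1 with rfl | hn
      · simp only [hc, hd, update_self]
        rw [← mem_cylinder_iff_eq.1 (hz _ _ (q k).2 _)]
        exact cylinder_anti _ (Nat.le_succ _)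
      · simp [hc, hd, hn]
  have hmono : ∀ n, Monotone fun k => d k n := fun n =>
    monotone_nat_of_le_succ fun k => by
      rcases eq_or_ne n k.unpair.1 with rfl | hn <;> simp [*]
  have hgrow : ∀ n j, j ≤ d (Nat.pair n j) n := by
    intro n j
    induction j with
    | zero => exact Nat.zero_le _
    | succ j ih =>
      calc j + 1 ≤ d (Nat.pair n j + 1) n := by simp [hd, ih]
        _ ≤ d (Nat.pair n (j + 1)) n := hmono n (Nat.pair_lt_pair_right n j.lt_succ_self)
  refine ⟨fun n i => c (Nat.pair n (i + 1)) n i, fun N =>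
    ⟨c (Nat.pair N N), d (Nat.pair N N), (q _).2, fun n hn => ?_⟩⟩
  have hx : ∀ k, (fun i => c (Nat.pair n (i + 1)) n i) ∈ cylinder (c k n) (d k n) := by
    intro k i hi
    have hk := hanti n (le_max_left k (Nat.pair n (i + 1))) (self_mem_cylinder _ _)
    have hK := hanti n (le_max_right k (Nat.pair n (i + 1))) (self_mem_cylinder _ _)
    exact (hK i (hgrow n (i + 1))).symm.trans (hk i hi)
  rw [← mem_cylinder_iff_eq.1 (hx _)]
  exact cylinder_anti _ ((hgrow n N).trans (hmono n (Nat.pair_lt_pair_left N hn).le))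

variable [TopologicalSpace α] [T2Space α] [OpensMeasurableSpace α]

theorem measurablySeparableFamily_range {f : ℕ → (ℕ → ℕ) → α} (hf : ∀ n, Continuous (f n))
    (h : ⋂ n, range (f n) = ∅) : MeasurablySeparableFamily fun n => range (f n) := by
  by_contra hbad
  obtain ⟨x, hx⟩ := exists_forall_cylinder_subset_of_refine
    (P := fun c d => ¬MeasurablySeparableFamily fun n => f n '' cylinder (c n) (d n))
    (fun c d h m => exists_refine_of_not_measurablySeparableFamily f h m) (c₀ := 0) (d₀ := 0)
    (by simpa using hbad)
  -- Two distinct values `f n (x n) ≠ f m (x m)` would separate a late stage of the fusion.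
  obtain ⟨n, m, hnm⟩ : ∃ n m, f n (x n) ≠ f m (x m) := by
    by_contra! heq
    exact (h.subset (mem_iInter.2 fun n => ⟨x n, heq n 0⟩) : f 0 (x 0) ∈ (∅ : Set α))
  obtain ⟨u, v, hu, hv, hxu, hxv, huv⟩ := t2_separation hnm
  obtain ⟨Nu, hNu⟩ :=
    exists_cylinder_subset ((hf n).continuousAt.preimage_mem_nhds (hu.mem_nhds hxu))
  obtain ⟨Nv, hNv⟩ :=
    exists_cylinder_subset ((hf m).continuousAt.preimage_mem_nhds (hv.mem_nhds hxv))
  obtain ⟨c, d, hcd, hsub⟩ := hx (max (max Nu Nv) (max n m + 1))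
  refine hcd (.of_disjoint (ne_of_apply_ne (fun k => f k (x k)) hnm) hu.measurableSet
    hv.measurableSet huv ?_ ?_)
  · exact image_subset_iff.2 <| (hsub n (by omega)).trans <| (cylinder_anti _ (by omega)).trans hNu
  · exact image_subset_iff.2 <| (hsub m (by omega)).trans <| (cylinder_anti _ (by omega)).trans hNv

theorem measurablySeparableFamily_of_analyticSet {A : ℕ → Set α} (hA : ∀ n, AnalyticSet (A n))
    (h : ⋂ n, A n = ∅) : MeasurablySeparableFamily A := by
  by_cases hempty : ∃ n, A n = ∅
  · obtain ⟨n, hn⟩ := hempty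
    exact .of_disjoint n.succ_ne_self.symm .empty .univ (empty_disjoint _) hn.subset
      (subset_univ _)
  · simp only [not_exists] at hempty
    simp only [AnalyticSet, hempty, false_or] at hA
    choose f hf hfA using hA
    obtain rfl : A = fun n => range (f n) := funext fun n => (hfA n).symm
    exact measurablySeparableFamily_range hf h

end Novikov

theorem TopologicalSpace.exists_isTopologicalBasis_range (Y : Type*) [TopologicalSpace Y]
    [SecondCountableTopology Y] : ∃ V : ℕ → Set Y, IsTopologicalBasis (range V) := by
  obtain ⟨b, hbc, -, hb⟩ := exists_countable_basis Y
  obtain ⟨V, hV⟩ := (hbc.insert ∅).exists_eq_range (insert_nonempty _ _)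
  exact ⟨V, hV ▸ hb.insert_empty⟩

theorem MeasureTheory.AnalyticSet.inter {α : Type*} [TopologicalSpace α] [T2Space α]
    {s t : Set α} (hs : AnalyticSet s) (ht : AnalyticSet t) : AnalyticSet (s ∩ t) := by
  rw [inter_eq_iInter]
  exact .iInter fun b => by cases b <;> assumption

theorem MeasureTheory.AnalyticSet.union {α : Type*} [TopologicalSpace α]
    {s t : Set α} (hs : AnalyticSet s) (ht : AnalyticSet t) : AnalyticSet (s ∪ t) := by
  rw [union_eq_iUnion]
  exact .iUnion fun b => by cases b <;> assumption

theorem isClosed_setOf_nonempty_iInter_compl {Y : Type*} [TopologicalSpace Y] [CompactSpace Y]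
    {V : ℕ → Set Y} (hV : ∀ n, IsOpen (V n)) :
    IsClosed {b : ℕ → Bool | (⋂ n, ⋂ (_ : b n = true), (V n)ᶜ).Nonempty} := by
  refine isOpen_compl_iff.1 (isOpen_iff_forall_mem_open.2 fun b hb => ?_)
  obtain ⟨u, hu⟩ := isCompact_univ.elim_finite_subfamily_closed
    (fun n : {n // b n = true} => (V n)ᶜ) (fun n => (hV n).isClosed_compl) (by
      rw [univ_inter, iInter_subtype]
      simpa only [mem_compl_iff, mem_ofPred_eq, not_nonempty_iff_eq_empty] using hb)
  refine ⟨⋂ n ∈ u, {b' | b' n = true}, fun b' hb' ⟨y, hy⟩ => ?_, isOpen_biInter_finset fun n _ =>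
    (continuous_apply (A := fun _ : ℕ => Bool) n).isOpen_preimage {true} (isOpen_discrete _),
    mem_iInter₂.2 fun n _ => n.2⟩
  have hyu : y ∈ univ ∩ ⋂ n ∈ u, (V n)ᶜ :=
    ⟨trivial, mem_iInter₂.2 fun n hn => mem_iInter₂.1 hy n (mem_iInter₂.1 hb' n hn)⟩
  rwa [hu] at hyu

section Projection

variable {X Y : Type*} [MeasurableSpace X] [StandardBorelSpace X] [TopologicalSpace Y]
  [PolishSpace Y] [MeasurableSpace Y] [BorelSpace Y]

theorem MeasurableSet.exists_eq_iUnion_prod_of_isOpen_section {B : Set (X × Y)}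
    (hB : MeasurableSet B) (hsec : ∀ x, IsOpen {y | (x, y) ∈ B}) :
    ∃ (E : ℕ → Set X) (V : ℕ → Set Y), (∀ n, MeasurableSet (E n)) ∧ (∀ n, IsOpen (V n)) ∧
      B = ⋃ n, E n ×ˢ V n := by
  let := upgradeStandardBorel X
  obtain ⟨V, hV⟩ := exists_isTopologicalBasis_range Y
  have hVo : ∀ n, IsOpen (V n) := fun n => hV.isOpen (mem_range_self n)
  -- `Z n` is only coanalytic; separating the sets `B \ Z n ×ˢ V n` (Novikov) and then the
  -- projections of the pieces from `(Z n)ᶜ` (Lusin) shrinks it to a Borel set `E n`.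
  set Z : ℕ → Set X := fun n => {x | ∀ y ∈ V n, (x, y) ∈ B}
  have hZ : ∀ n, AnalyticSet (Z n)ᶜ := fun n => by
    have : (Z n)ᶜ = Prod.fst '' (Bᶜ ∩ Prod.snd ⁻¹' V n) := by ext x; simp [Z, and_comm]
    rw [this]
    exact (hB.compl.inter (measurable_snd (hVo n).measurableSet)).analyticSet.image_of_continuous
      continuous_fst
  have hcover : B = ⋃ n, Z n ×ˢ V n := by
    ext ⟨x, y⟩
    refine ⟨fun h => ?_, fun h => ?_⟩
    · obtain ⟨-, ⟨n, rfl⟩, hy, hVB⟩ := hV.exists_subset_of_mem_open h (hsec x)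
      exact mem_iUnion.2 ⟨n, fun y' hy' => hVB hy', hy⟩
    · obtain ⟨n, hx, hy⟩ := mem_iUnion.1 h
      exact hx y hy
  have hM : ∀ n, AnalyticSet (B \ Z n ×ˢ V n) := fun n => by
    rw [sdiff_eq, compl_prod_eq_union, prod_univ, univ_prod]
    exact hB.analyticSet.inter (((hZ n).preimage continuous_fst).union
      ((hVo n).isClosed_compl.preimage continuous_snd).analyticSet)
  obtain ⟨N, hMN, hN, hNe⟩ := measurablySeparableFamily_of_analyticSet hM
    (by rw [← sdiff_iUnion, ← hcover, sdiff_self])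
  have hR : ∀ n, B \ N n ⊆ Z n ×ˢ V n := fun n p hp =>
    by_contra fun h => hp.2 (hMN n ⟨hp.1, h⟩)
  choose E hRE hZE hE using fun n =>
    ((hB.diff (hN n)).analyticSet.image_of_continuous continuous_fst).measurablySeparable (hZ n)
      (disjoint_compl_right_iff_subset.2 (image_subset_iff.2 fun p hp => (hR n hp).1))
  refine ⟨E, V, hE, hVo, Subset.antisymm (fun p hp => ?_) ?_⟩
  · obtain ⟨n, hn⟩ : ∃ n, p ∉ N n := by
      by_contra! h
      exact (hNe.subset (mem_iInter.2 h) : p ∈ (∅ : Set (X × Y)))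
    exact mem_iUnion.2 ⟨n, hRE n ⟨p, ⟨hp, hn⟩, rfl⟩, (hR n ⟨hp, hn⟩).2⟩
  · rw [hcover]
    exact iUnion_mono fun n => prod_mono (disjoint_compl_left_iff_subset.1 (hZE n)) le_rfl

variable [CompactSpace Y] {C : Set (X × Y)}

theorem MeasurableSet.measurableSet_image_fst_of_isCompact_section (hC : MeasurableSet C)
    (hsec : ∀ x, IsCompact {y | (x, y) ∈ C}) : MeasurableSet (Prod.fst '' C) := by
  obtain ⟨E, V, hE, hV, hCE⟩ :=
    hC.compl.exists_eq_iUnion_prod_of_isOpen_section fun x => (hsec x).isClosed.isOpen_compl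
  classical
  let g : X → ℕ → Bool := fun x n => decide (x ∈ E n)
  have hg : Measurable g := measurable_pi_lambda _ fun n => measurable_to_bool (by
    convert hE n; ext; simp [g])
  have hCg : Prod.fst '' C = g ⁻¹' {b | (⋂ n, ⋂ (_ : b n = true), (V n)ᶜ).Nonempty} := by
    ext x
    have hCx : ∀ y, (x, y) ∈ C ↔ ∀ n, x ∈ E n → y ∉ V n := fun y => by
      rw [← not_iff_not, ← mem_compl_iff, hCE]
      simp
    simp [g, hCx]
  rw [hCg]
  exact hg (isClosed_setOf_nonempty_iInter_compl hV).measurableSet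

theorem MeasurableSet.measurableSet_exists_mem_of_isCompact_section (hC : MeasurableSet C)
    (hsec : ∀ x, IsCompact {y | (x, y) ∈ C}) {F : Set Y} (hF : IsClosed F) :
    MeasurableSet {x | ∃ y ∈ F, (x, y) ∈ C} := by
  convert (hC.inter (measurable_snd hF.measurableSet)).measurableSet_image_fst_of_isCompact_section
    fun x => (hsec x).inter_right hF using 1
  ext x
  simp [and_comm]

theorem MeasurableSet.measurable_sInf_image_of_isCompact_section (hC : MeasurableSet C)
    (hsec : ∀ x, IsCompact {y | (x, y) ∈ C}) {φ : Y → ℝ} (hφ : Continuous φ) :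
    Measurable fun x => sInf (φ '' {y | (x, y) ∈ C}) := by
  refine measurable_of_Iic fun a => ?_
  -- On empty sections the infimum is `sInf ∅ = 0`.
  have : (fun x => sInf (φ '' {y | (x, y) ∈ C})) ⁻¹' Iic a =
      {x | ∃ y ∈ φ ⁻¹' Iic a, (x, y) ∈ C} ∪ ((Prod.fst '' C)ᶜ ∩ {_x | 0 ≤ a}) := by
    ext x
    rcases eq_empty_or_nonempty {y | (x, y) ∈ C} with h | h
    · have : x ∉ Prod.fst '' C := fun ⟨p, hp, hpx⟩ => h.subset (show p.2 ∈ _ from hpx ▸ hp)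
      simp_all
    · have hx : x ∈ Prod.fst '' C := ⟨(x, h.some), h.some_mem, rfl⟩
      have himg := (hsec x).image hφ
      simp only [mem_preimage, mem_Iic, mem_union, mem_inter_iff, mem_compl_iff, hx,
        not_true_eq_false, false_and, or_false]
      refine ⟨fun hle => ?_, fun ⟨y, hya, hy⟩ => (csInf_le himg.bddBelow ⟨y, hy, rfl⟩).trans hya⟩
      obtain ⟨y, hy, hyinf⟩ := himg.sInf_mem (h.image φ)
      exact ⟨y, hyinf.symm ▸ hle, hy⟩
  rw [this]
  exact (hC.measurableSet_exists_mem_of_isCompact_section hsec (isClosed_Iic.preimage hφ)).union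
    ((hC.measurableSet_image_fst_of_isCompact_section hsec).compl.inter (.const _))

end Projection

section Selectors

variable {X : Type*}

theorem continuous_apply_coe (k : ℕ) : Continuous fun f : H => (f k : ℝ) :=
  continuous_subtype_val.comp (continuous_apply k)

def coordInf (D : Set (X × H)) (k : ℕ) (x : X) : ℝ :=
  sInf ((fun f : H => (f k : ℝ)) '' {f | (x, f) ∈ D})

def lexMinStep (k : ℕ) (D : Set (X × H)) : Set (X × H) :=
  {p ∈ D | (p.2 k : ℝ) = coordInf D k p.1}

def lexMinSet (C : Set (X × H)) : ℕ → Set (X × H)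
  | 0 => C
  | k + 1 => lexMinStep k (lexMinSet C k)

variable {C : Set (X × H)}

theorem isCompact_lexMinSet_section (hsec : ∀ x, IsCompact {f | (x, f) ∈ C}) (k : ℕ) (x : X) :
    IsCompact {f | (x, f) ∈ lexMinSet C k} := by
  induction k with
  | zero => exact hsec x
  | succ k ih =>
    exact ih.inter_right (isClosed_eq (continuous_apply_coe k)
      (continuous_const (y := coordInf (lexMinSet C k) k x)))

theorem measurableSet_lexMinSet [MeasurableSpace X] [StandardBorelSpace X] (hC : MeasurableSet C)
    (hsec : ∀ x, IsCompact {f | (x, f) ∈ C}) (k : ℕ) : MeasurableSet (lexMinSet C k) := by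
  induction k with
  | zero => exact hC
  | succ k ih =>
    exact ih.inter <| measurableSet_eq_fun ((continuous_apply_coe k).measurable.comp measurable_snd)
      ((ih.measurable_sInf_image_of_isCompact_section (isCompact_lexMinSet_section hsec k)
        (continuous_apply_coe k)).comp measurable_fst)

theorem nonempty_lexMinSet_section (hsec : ∀ x, IsCompact {f | (x, f) ∈ C}) {x : X}
    (hx : {f | (x, f) ∈ C}.Nonempty) (k : ℕ) : {f | (x, f) ∈ lexMinSet C k}.Nonempty := by
  induction k with
  | zero => exact hx
  | succ k ih =>
    obtain ⟨f, hf, hfk⟩ :=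
      ((isCompact_lexMinSet_section hsec k x).image (continuous_apply_coe k)).sInf_mem (ih.image _)
    exact ⟨f, hf, hfk⟩

theorem exists_measurable_selector [MeasurableSpace X] [StandardBorelSpace X]
    (hC : MeasurableSet C) (hsec : ∀ x, IsCompact {f | (x, f) ∈ C}) :
    ∃ s : X → H, Measurable s ∧ ∀ x, {f | (x, f) ∈ C}.Nonempty → (x, s x) ∈ C := by
  -- `projIcc` only makes the values land in `[-1, 1]`: on a nonempty section the infima are the
  -- coordinates of its lexicographic minimum.
  have h₁ : (-1 : ℝ) ≤ 1 := by norm_num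
  refine ⟨fun x k => projIcc (-1) 1 h₁ (coordInf (lexMinSet C k) k x),
    measurable_pi_lambda _ fun k => (continuous_projIcc (h := h₁)).measurable.comp
      ((measurableSet_lexMinSet hC hsec k).measurable_sInf_image_of_isCompact_section
        (isCompact_lexMinSet_section hsec k) (continuous_apply_coe k)), fun x hx => ?_⟩
  obtain ⟨f, hf⟩ := IsCompact.nonempty_iInter_of_sequence_nonempty_isCompact_isClosed
    (fun k => {f | (x, f) ∈ lexMinSet C k}) (fun k _ hf => hf.1)
    (nonempty_lexMinSet_section hsec hx) (isCompact_lexMinSet_section hsec 0 x)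
    fun k => (isCompact_lexMinSet_section hsec k x).isClosed
  have hfk : ∀ k, (f k : ℝ) = coordInf (lexMinSet C k) k x := fun k => (mem_iInter.1 hf (k + 1)).2
  have hsf : (fun k => projIcc (-1) 1 h₁ (coordInf (lexMinSet C k) k x)) = f :=
    funext fun k => by rw [← hfk, projIcc_val]
  have hf₀ : (x, f) ∈ lexMinSet C 0 := mem_iInter.1 hf 0
  dsimp only
  rwa [hsf]

end Selectors

theorem TopologicalSpace.exists_seq_isClosed_forall_mem_subset (Y : Type*) [TopologicalSpace Y]
    [SecondCountableTopology Y] [RegularSpace Y] :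
    ∃ F : ℕ → Set Y, (∀ n, IsClosed (F n)) ∧ ∀ y U, IsOpen U → y ∈ U → ∃ n, y ∈ F n ∧ F n ⊆ U := by
  obtain ⟨V, hV⟩ := exists_isTopologicalBasis_range Y
  refine ⟨fun n => closure (V n), fun n => isClosed_closure, fun y U hU hy => ?_⟩
  obtain ⟨t, ht, htc, htU⟩ := exists_mem_nhds_isClosed_subset (hU.mem_nhds hy)
  obtain ⟨-, ⟨n, rfl⟩, hyV, hVt⟩ := hV.mem_nhds_iff.1 ht
  exact ⟨n, subset_closure hyV, (closure_minimal hVt htc).trans htU⟩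

theorem exists_measurable_selectors_dense_in_section {Z : Type*} [MeasurableSpace Z]
    [StandardBorelSpace Z] {A At : Set (Z × H)} (hA : MeasurableSet A)
    (hne : ∀ z, {f | (z, f) ∈ A}.Nonempty) (hcpt : ∀ z, IsCompact {f | (z, f) ∈ A})
    (hAt : MeasurableSet At) (hsub : At ⊆ A) (hAtcpt : ∀ z, IsCompact {f | (z, f) ∈ At}) :
    ∃ f : ℕ → Z → H, (∀ n, Measurable (f n)) ∧ (∀ n z, (z, f n z) ∈ A) ∧
      ∀ z U, IsOpen U → ({g | (z, g) ∈ At} ∩ U).Nonempty →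
        ∃ n, f n z ∈ {g | (z, g) ∈ At} ∩ U := by
  classical
  obtain ⟨F, hFc, hF⟩ := exists_seq_isClosed_forall_mem_subset H
  obtain ⟨s₀, hs₀, hs₀A⟩ := exists_measurable_selector hA hcpt
  choose s hs hsAt using fun n => exists_measurable_selector
    (hAt.inter (measurable_snd (hFc n).measurableSet)) fun z => (hAtcpt z).inter_right (hFc n)
  let D n := {z | ∃ g ∈ F n, (z, g) ∈ At}
  have hD n : MeasurableSet (D n) :=
    hAt.measurableSet_exists_mem_of_isCompact_section hAtcpt (hFc n)
  refine ⟨fun n => (D n).piecewise (s n) s₀, fun n => Measurable.piecewise (hD n) (hs n) hs₀,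
    fun n z => ?_, fun z U hU ⟨g, hgAt, hgU⟩ => ?_⟩
  · dsimp only
    by_cases hz : z ∈ D n
    · rw [piecewise_eq_of_mem _ _ _ hz]
      obtain ⟨g, hgF, hgAt⟩ := hz
      exact hsub (hsAt n z ⟨g, hgAt, hgF⟩).1
    · rw [piecewise_eq_of_notMem _ _ _ hz]
      exact hs₀A z (hne z)
  · obtain ⟨n, hgF, hFU⟩ := hF g U hU hgU
    have hz : z ∈ D n := ⟨g, hgF, hgAt⟩
    obtain ⟨hsn, hsF⟩ := hsAt n z ⟨g, hgAt, hgF⟩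
    refine ⟨n, ?_⟩
    dsimp only
    rw [piecewise_eq_of_mem _ _ _ hz]
    exact ⟨hsn, hFU hsF⟩

theorem abs_sub_apply_le_two (f g : H) (n : ℕ) : |(f n : ℝ) - g n| ≤ 2 := by
  obtain ⟨hf₁, hf₂⟩ := (f n).2
  obtain ⟨hg₁, hg₂⟩ := (g n).2
  rw [abs_le]
  constructor <;> linarith

theorem abs_sub_apply_le_normDist (f g : H) (n : ℕ) : |(f n : ℝ) - g n| ≤ normDist f g :=
  le_ciSup (f := fun n => |(f n : ℝ) - g n|)
    ⟨2, by rintro _ ⟨n, rfl⟩; exact abs_sub_apply_le_two f g n⟩ n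

theorem normDist_le_iff {f g : H} {r : ℝ} : normDist f g ≤ r ↔ ∀ n, |(f n : ℝ) - g n| ≤ r :=
  ⟨fun h n => (abs_sub_apply_le_normDist f g n).trans h, ciSup_le⟩

theorem normDist_comm (f g : H) : normDist f g = normDist g f := by
  simp only [normDist, abs_sub_comm]

theorem normDist_triangle (f g h : H) : normDist f h ≤ normDist f g + normDist g h :=
  ciSup_le fun n => (abs_sub_le _ _ _).trans
    (add_le_add (abs_sub_apply_le_normDist f g n) (abs_sub_apply_le_normDist g h n))

theorem isClosed_setOf_normDist_le (g : H) (r : ℝ) : IsClosed {f | normDist f g ≤ r} := by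
  simp_rw [normDist_le_iff, ofPred_forall]
  exact isClosed_iInter fun n =>
    isClosed_le ((continuous_apply_coe n).sub continuous_const).abs continuous_const

theorem normDist_le_normDiam {S : Set H} {f g : H} (hf : f ∈ S) (hg : g ∈ S) :
    normDist f g ≤ normDiam S :=
  le_csSup ⟨2, by rintro _ ⟨f, -, g, -, rfl⟩; exact ciSup_le (abs_sub_apply_le_two f g)⟩
    ⟨f, hf, g, hg, rfl⟩

theorem normDiam_le {S : Set H} {r : ℝ} (hr : 0 ≤ r)
    (h : ∀ f ∈ S, ∀ g ∈ S, normDist f g ≤ r) : normDiam S ≤ r :=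
  Real.sSup_le (by rintro _ ⟨f, hf, g, hg, rfl⟩; exact h f hf g hg) hr

theorem IsCompact.exists_isOpen_inter_subset_of_subset_iUnion {α ι : Type*}
    [TopologicalSpace α] [T2Space α] [Countable ι] {K : Set α} (hK : IsCompact K)
    (hne : K.Nonempty) {F : ι → Set α} (hF : ∀ i, IsClosed (F i)) (hcov : K ⊆ ⋃ i, F i) :
    ∃ i U, IsOpen U ∧ (K ∩ U).Nonempty ∧ K ∩ U ⊆ F i := by
  have := isCompact_iff_compactSpace.1 hK
  have := hne.to_subtype
  obtain ⟨i, y, hy⟩ := nonempty_interior_of_iUnion_of_closed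
    (f := fun i => (Subtype.val ⁻¹' F i : Set K)) (fun i => (hF i).preimage continuous_subtype_val)
    (eq_univ_of_forall fun y => by simpa using hcov y.2)
  obtain ⟨U, hU, hUeq⟩ := isOpen_induced_iff.1 (isOpen_interior (s := Subtype.val ⁻¹' F i))
  refine ⟨i, U, hU, ⟨y, y.2, (hUeq ▸ hy : y ∈ Subtype.val ⁻¹' U)⟩, fun z ⟨hzK, hzU⟩ => ?_⟩
  have hz : (⟨z, hzK⟩ : K) ∈ Subtype.val ⁻¹' U := hzU
  rw [hUeq] at hz
  exact (interior_subset hz : (⟨z, hzK⟩ : K) ∈ Subtype.val ⁻¹' F i)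

theorem exists_isOpen_normDiam_inter_le {K S : Set H} (hK : IsCompact K) (hne : K.Nonempty)
    (hKS : K ⊆ S) (hS : NormSeparable S) {ε : ℝ} (hε : 0 < ε) :
    ∃ U, IsOpen U ∧ (K ∩ U).Nonempty ∧ normDiam (K ∩ U) ≤ ε := by
  obtain ⟨D, hD, -, hdense⟩ := hS
  have := hD.to_subtype
  obtain ⟨g, U, hU, hKU, hsub⟩ := hK.exists_isOpen_inter_subset_of_subset_iUnion hne
    (F := fun g : D => {f | normDist f g ≤ ε / 2}) (fun g => isClosed_setOf_normDist_le _ _)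
    fun f hf => by
      obtain ⟨g, hg, hfg⟩ := hdense f (hKS hf) (ε / 2) (by positivity)
      exact mem_iUnion.2 ⟨⟨g, hg⟩, hfg.le⟩
  refine ⟨U, hU, hKU, normDiam_le hε.le fun f hf f' hf' => ?_⟩
  calc normDist f f' ≤ normDist f g + normDist g f' := normDist_triangle _ _ _
    _ ≤ ε / 2 + ε / 2 := add_le_add (hsub hf) (normDist_comm f' g ▸ hsub hf')
    _ = ε := add_halves ε

theorem mem_diff_Dstar_iff {ε : ℝ} {K : Set H} {f : H} :
    f ∈ K \ Dstar ε K ↔ f ∈ K ∧ ∃ U, IsOpen U ∧ f ∈ U ∧ normDiam (K ∩ U) ≤ ε := by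
  simp [Dstar]

/-- **Lemma 6.** Let `Z` be standard Borel, `A ⊆ Z × H` Borel with nonempty compact norm
separable sections, `ε > 0`, and `Ã ⊆ A` Borel with compact (possibly empty) sections.
Then there is a sequence of Borel selectors `(f_n)` of `A` such that whenever `Ã_z ≠ ∅`,
the set `{f_n(z) : f_n(z) ∈ Ã_z \ 𝔻_ε(Ã_z)}` is nonempty and norm `ε`-dense in
`Ã_z \ 𝔻_ε(Ã_z)`. -/
theorem exists_selectors_epsDense (Z : Type) [MeasurableSpace Z] [StandardBorelSpace Z]
    (A : Set (Z × H)) (hA : MeasurableSet A)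
    (hne : ∀ z : Z, {f : H | (z, f) ∈ A}.Nonempty)
    (hcpt : ∀ z : Z, IsCompact {f : H | (z, f) ∈ A})
    (hsep : ∀ z : Z, NormSeparable {f : H | (z, f) ∈ A})
    (ε : ℝ) (hε : 0 < ε)
    (At : Set (Z × H)) (hAt : MeasurableSet At) (hsub : At ⊆ A)
    (hAtcpt : ∀ z : Z, IsCompact {f : H | (z, f) ∈ At}) :
    ∃ f : ℕ → Z → H, (∀ n, Measurable (f n)) ∧
      (∀ n z, (z, f n z) ∈ A) ∧
      ∀ z : Z, {g : H | (z, g) ∈ At}.Nonempty →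
        (∃ n, f n z ∈ {g : H | (z, g) ∈ At} \ Dstar ε {g : H | (z, g) ∈ At}) ∧
        ∀ g ∈ {g : H | (z, g) ∈ At} \ Dstar ε {g : H | (z, g) ∈ At},
          ∃ n, f n z ∈ {g : H | (z, g) ∈ At} \ Dstar ε {g : H | (z, g) ∈ At} ∧
            normDist (f n z) g ≤ ε := by
  obtain ⟨f, hf, hfA, hhit⟩ :=
    exists_measurable_selectors_dense_in_section hA hne hcpt hAt hsub hAtcpt
  refine ⟨f, hf, hfA, fun z hz => ⟨?_, fun g hg => ?_⟩⟩
  · obtain ⟨U, hU, hKU, hdiam⟩ :=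
      exists_isOpen_normDiam_inter_le (hAtcpt z) hz (fun g hg => hsub hg) (hsep z) hε
    obtain ⟨n, hn⟩ := hhit z U hU hKU
    exact ⟨n, mem_diff_Dstar_iff.2 ⟨hn.1, U, hU, hn.2, hdiam⟩⟩
  · obtain ⟨hgK, U, hU, hgU, hdiam⟩ := mem_diff_Dstar_iff.1 hg
    obtain ⟨n, hn⟩ := hhit z U hU ⟨g, hgK, hgU⟩
    exact ⟨n, mem_diff_Dstar_iff.2 ⟨hn.1, U, hU, hn.2, hdiam⟩,
      (normDist_le_normDiam hn ⟨hgK, hgU⟩).trans hdiam⟩
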